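/- Let n = 2^m with m ≥ 2 and let C1 be an odd binary (n, 2^(n-1)/n, 4) code. Then for every binary word x of length n with an even number of 1s there exists a unique y ∈ C1 with Hamming distance d(x,y) = 1. -/

import Mathlib

/-!
Flipping one bit of a codeword gives `n` distinct even words, and since the minimum distance is
at least 3, no word arises this way from two different codewords. These unit spheres therefore
cover `|C1| * n = 2 ^ (n - 1)` even words, which is all of them: every even word is at distance 1
from some codeword, and by the triangle inequality from only one.
-/

/-- The (Hamming) weight of a binary word: the number of 1s. -/
def wt {n : ℕ} (y : Fin n → Fin 2) : ℕ :=
  (Finset.univ.filter (fun i => y i = 1)).card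

open Finset Function

theorem Pi.single_left_injective {ι β : Type*} [DecidableEq ι] [Zero β] {b : β} (hb : b ≠ 0) :
    Injective fun i : ι => (Pi.single i b : ι → β) := by
  intro i j hij
  by_contra hne
  simpa [Pi.single_apply, hne, hb] using congrFun hij i

section Hamming

variable {ι β : Type*} [Fintype ι] [DecidableEq β]

theorem hammingNorm_single [DecidableEq ι] [Zero β] (i : ι) {b : β} (hb : b ≠ 0) :
    hammingNorm (Pi.single i b : ι → β) = 1 := by
  rw [hammingNorm, card_eq_one]
  exact ⟨i, by ext j; by_cases h : j = i <;> simp [Pi.single_apply, h, hb]⟩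

theorem hammingDist_add_single [DecidableEq ι] [AddGroup β] (x : ι → β) (i : ι) {b : β}
    (hb : b ≠ 0) : hammingDist x (x + Pi.single i b) = 1 := by
  rw [hammingDist_eq_hammingNorm, neg_add_cancel_left, hammingNorm_single i hb]

theorem eq_of_hammingDist_eq_one {x c c' : ι → β} (hdist : c ≠ c' → 3 ≤ hammingDist c c')
    (hc : hammingDist c x = 1) (hc' : hammingDist c' x = 1) : c = c' := by
  by_contra hne
  have := hammingDist_triangle_right c c' x
  have := hdist hne
  omega

end Hamming

section Binary

variable {ι : Type*} [Fintype ι] [DecidableEq ι]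

def flips (x : ι → Fin 2) : Finset (ι → Fin 2) :=
  univ.image fun i => x + Pi.single i 1

theorem hammingDist_of_mem_flips {x y : ι → Fin 2} (hy : y ∈ flips x) : hammingDist x y = 1 := by
  obtain ⟨i, -, rfl⟩ := mem_image.1 hy
  exact hammingDist_add_single x i one_ne_zero

theorem sum_of_mem_flips {x y : ι → Fin 2} (hy : y ∈ flips x) : ∑ i, y i = ∑ i, x i + 1 := by
  obtain ⟨i, -, rfl⟩ := mem_image.1 hy
  simp [sum_add_distrib]

theorem card_flips (x : ι → Fin 2) : #(flips x) = Fintype.card ι :=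
  card_image_of_injective _ ((add_right_injective x).comp (Pi.single_left_injective one_ne_zero))

theorem card_filter_sum_eq_zero [Nonempty ι] :
    #{x : ι → Fin 2 | ∑ i, x i = 0} = 2 ^ (Fintype.card ι - 1) := by
  let sumHom : (ι → Fin 2) →+ Fin 2 := ∑ i, Pi.evalAddMonoidHom (fun _ => Fin 2) i
  have hsum (x : ι → Fin 2) : sumHom x = ∑ i, x i := by simp [sumHom]
  obtain ⟨i⟩ := ‹Nonempty ι›
  have hfiber : #{x : ι → Fin 2 | ∑ i, x i = 0} = #{x : ι → Fin 2 | ∑ i, x i = 1} := by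
    simpa only [hsum] using AddMonoidHom.card_fiber_eq_of_mem_range sumHom
      ⟨0, map_zero sumHom⟩ ⟨Pi.single i 1, by simp [hsum]⟩
  have htotal : #{x : ι → Fin 2 | ∑ i, x i = 0} + #{x : ι → Fin 2 | ∑ i, x i = 1} =
      2 * 2 ^ (Fintype.card ι - 1) := by
    have hone (s : Fin 2) : s = 1 ↔ ¬s = 0 := by omega
    simp_rw [hone, card_filter_add_card_filter_not, card_univ, Fintype.card_fun,
      Fintype.card_fin, ← pow_succ', Nat.sub_add_cancel Fintype.card_pos]
  omega

theorem biUnion_flips_eq_filter_sum_eq_zero [Nonempty ι] (C : Finset (ι → Fin 2))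
    (hdist : ∀ c ∈ C, ∀ c' ∈ C, c ≠ c' → 3 ≤ hammingDist c c')
    (hodd : ∀ c ∈ C, ∑ i, c i = 1)
    (hcard : #C * Fintype.card ι = 2 ^ (Fintype.card ι - 1)) :
    C.biUnion flips = ({x | ∑ i, x i = 0} : Finset (ι → Fin 2)) := by
  have hsub : C.biUnion flips ⊆ ({x | ∑ i, x i = 0} : Finset (ι → Fin 2)) := by
    intro y hy
    obtain ⟨c, hc, hy⟩ := mem_biUnion.1 hy
    rw [mem_filter, sum_of_mem_flips hy, hodd c hc]
    exact ⟨mem_univ y, rfl⟩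
  have hdisj : (C : Set (ι → Fin 2)).PairwiseDisjoint flips := fun c hc c' hc' hne =>
    disjoint_left.2 fun _ hy hy' => hne <| eq_of_hammingDist_eq_one (hdist c hc c' hc')
      (hammingDist_of_mem_flips hy) (hammingDist_of_mem_flips hy')
  refine eq_of_subset_of_card_le hsub ?_
  rw [card_biUnion hdisj, sum_const_nat fun c _ => card_flips c, hcard, card_filter_sum_eq_zero]

end Binary

open Fin.CommRing in
theorem val_sum_eq_wt_mod_two {n : ℕ} (x : Fin n → Fin 2) : (∑ i, x i).val = wt x % 2 := by
  have hx (i : Fin n) : x i = if x i = 1 then 1 else 0 := by split_ifs <;> omega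
  rw [sum_congr rfl fun i _ => hx i, sum_boole, Fin.val_natCast, wt]

theorem two_pow_dvd_two_pow_two_pow_sub_one (m : ℕ) : 2 ^ m ∣ 2 ^ (2 ^ m - 1) :=
  pow_dvd_pow 2 (Nat.le_sub_one_of_lt Nat.lt_two_pow_self)

theorem unique_neighbor_in_odd_code_general (m n : ℕ) (hn : n = 2 ^ m)
    (C1 : Finset (Fin n → Fin 2))
    (hC1card : C1.card = 2 ^ (n - 1) / n)
    (hC1dist : ∀ x ∈ C1, ∀ y ∈ C1, x ≠ y → 4 ≤ hammingDist x y)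
    (hC1odd : ∀ x ∈ C1, wt x % 2 = 1) :
    ∀ x : Fin n → Fin 2, wt x % 2 = 0 →
      ∃! y, y ∈ C1 ∧ hammingDist x y = 1 := by
  subst hn
  have : Nonempty (Fin (2 ^ m)) := ⟨⟨0, by positivity⟩⟩
  have hdist (c) (hc : c ∈ C1) (c') (hc' : c' ∈ C1) (hne : c ≠ c') : 3 ≤ hammingDist c c' :=
    (hC1dist c hc c' hc' hne).trans' (by norm_num)
  have hcard : #C1 * Fintype.card (Fin (2 ^ m)) = 2 ^ (Fintype.card (Fin (2 ^ m)) - 1) := by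
    rw [Fintype.card_fin, hC1card, Nat.div_mul_cancel (two_pow_dvd_two_pow_two_pow_sub_one m)]
  have hcover := biUnion_flips_eq_filter_sum_eq_zero C1 hdist
    (fun c hc => Fin.ext <| by rw [val_sum_eq_wt_mod_two, hC1odd c hc]; rfl) hcard
  intro x hx
  have hxcovered : x ∈ C1.biUnion flips :=
    hcover ▸ mem_filter.2 ⟨mem_univ x, Fin.ext <| by rw [val_sum_eq_wt_mod_two, hx]; rfl⟩
  obtain ⟨y, hy, hxy⟩ := mem_biUnion.1 hxcovered
  have hyx := hammingDist_of_mem_flips hxy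
  refine ⟨y, ⟨hy, hammingDist_comm x y ▸ hyx⟩, fun z ⟨hz, hxz⟩ => ?_⟩
  exact eq_of_hammingDist_eq_one (hdist z hz y hy) (hammingDist_comm x z ▸ hxz) hyx

/-- If `C1` is an odd binary `(n = 2^m, 2^(n-1)/n, 4)` code, then every
even-weight binary word of length `n` is at Hamming distance exactly 1
from a unique codeword of `C1`. -/
theorem unique_neighbor_in_odd_code (m n : ℕ) (hm : 2 ≤ m) (hn : n = 2 ^ m)
    (C1 : Finset (Fin n → Fin 2))
    (hC1card : C1.card = 2 ^ (n - 1) / n)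
    (hC1dist : ∀ x ∈ C1, ∀ y ∈ C1, x ≠ y → 4 ≤ hammingDist x y)
    (hC1odd : ∀ x ∈ C1, wt x % 2 = 1) :
    ∀ x : Fin n → Fin 2, wt x % 2 = 0 →
      ∃! y, y ∈ C1 ∧ hammingDist x y = 1 :=
  unique_neighbor_in_odd_code_general m n hn C1 hC1card hC1dist hC1odd
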